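/- arXiv:1008.3091 — 2 statements merged into one kernel-verified Lean document; each statement's English description precedes it below -/
import Mathlib

section
/- Let G=(V,E) be a finite connected simple graph, let x ∈ V, and let a, b be vertices of G/x (i.e., a, b ∈ V \ N(x)) such that no shortest path from a to b in G passes through x. Then d_{G/x}(a,b) = d_G(a,b) − 1 if and only if there exists a path in G from a to b of length d_G(a,b) + 1 that passes through x. -/
open SimpleGraph

noncomputable def eccentr {V : Type} (G : SimpleGraph V) (x : V) : ℕ :=
  sSup (Set.range (G.dist x))

noncomputable def grRadius {V : Type} (G : SimpleGraph V) : ℕ :=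
  sInf (Set.range (eccentr G))

def ncontract {V : Type} (G : SimpleGraph V) (x : V) :
    SimpleGraph {v : V // ¬ G.Adj x v} where
  Adj a b := G.Adj a.1 b.1 ∨
    (a.1 = x ∧ b.1 ≠ x ∧ ∃ y, G.Adj x y ∧ G.Adj y b.1) ∨
    (b.1 = x ∧ a.1 ≠ x ∧ ∃ y, G.Adj x y ∧ G.Adj y a.1)
  symm := ⟨fun a b h => by
    rcases h with h | h | h
    · exact Or.inl h.symm
    · exact Or.inr (Or.inr h)
    · exact Or.inr (Or.inl h)⟩
  loopless := ⟨fun a h => by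
    rcases h with h | ⟨h1, h2, -⟩ | ⟨h1, h2, -⟩
    · exact G.loopless.irrefl _ h
    · exact h2 h1
    · exact h2 h1⟩

/-!
Write `d`, `d'` for the distances in `G` and `G/x`, and `s = d(a,x) + d(x,b)`. For `a, b` outside
the closed neighbourhood of `x`, `d'(a,b) = min (d(a,b)) (s - 2)`: a shortest `a`–`b` walk of
`G/x` either avoids `x`, and is then a walk of `G`, or passes through `x`, and
`d'(x,v) = d(x,v) - 1` for `v ≠ x`. As no shortest `a`–`b` path passes through `x`,
`s ≥ d(a,b) + 1`, so `d'(a,b) = d(a,b) - 1` iff `s = d(a,b) + 1`. Finally, an `a`–`b` walk of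
length at most `d(a,b) + 1` is a path, since cutting out a cycle at a repeated vertex would save
at least two edges; so `s = d(a,b) + 1` iff some path of length `d(a,b) + 1` passes through `x`.
-/

namespace SimpleGraph

variable {V : Type*} {G : SimpleGraph V} {u v w : V}

theorem Walk.dist_add_dist_le_length (p : G.Walk u v) (hw : w ∈ p.support) :
    G.dist u w + G.dist w v ≤ p.length := by
  classical
  calc G.dist u w + G.dist w v
      ≤ (p.takeUntil w hw).length + (p.dropUntil w hw).length :=
        add_le_add (dist_le _) (dist_le _)
    _ = p.length := by rw [← Walk.length_append, p.take_spec hw]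

theorem Walk.isPath_of_length_le_dist_add_one (p : G.Walk u v)
    (hp : p.length ≤ G.dist u v + 1) : p.IsPath := by
  classical
  induction p with
  | nil => exact .nil
  | @cons u w v h p ih =>
    rw [Walk.length_cons] at hp
    have htri : G.dist u v ≤ 1 + G.dist w v := by
      simpa [dist_eq_one_iff_adj.mpr h] using p.reachable.dist_triangle_right u
    refine (Walk.cons_isPath_iff h p).mpr ⟨ih (by omega), fun hu => ?_⟩
    have hshort := p.length_dropUntil_lt_length hu h.ne
    have hdist := dist_le (p.dropUntil u hu)
    omega

theorem Connected.exists_walk_mem_support_length_eq (hG : G.Connected) (u w v : V) :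
    ∃ p : G.Walk u v, w ∈ p.support ∧ p.length = G.dist u w + G.dist w v := by
  obtain ⟨p, hp⟩ := hG.exists_walk_length_eq_dist u w
  obtain ⟨q, hq⟩ := hG.exists_walk_length_eq_dist w v
  exact ⟨p.append q, p.support_subset_support_append_left q p.end_mem_support,
    by rw [Walk.length_append, hp, hq]⟩

theorem dist_add_one_le_dist_add_dist (hG : G.Connected)
    (hno : ∀ p : G.Walk u v, p.IsPath → p.length = G.dist u v → w ∉ p.support) :
    G.dist u v + 1 ≤ G.dist u w + G.dist w v := by
  obtain ⟨p, hw, hp⟩ := hG.exists_walk_mem_support_length_eq u w v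
  by_contra! hlt
  have hshortest : p.length = G.dist u v := le_antisymm (by omega) (dist_le p)
  exact hno p (p.isPath_of_length_eq_dist hshortest) hshortest hw

theorem exists_path_length_eq_dist_add_one_iff (hG : G.Connected)
    (hs : G.dist u v + 1 ≤ G.dist u w + G.dist w v) :
    (∃ p : G.Walk u v, p.IsPath ∧ p.length = G.dist u v + 1 ∧ w ∈ p.support) ↔
      G.dist u w + G.dist w v = G.dist u v + 1 := by
  constructor
  · rintro ⟨p, -, hp, hw⟩
    have := p.dist_add_dist_le_length hw
    omega
  · intro hsum
    obtain ⟨p, hw, hp⟩ := hG.exists_walk_mem_support_length_eq u w v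
    exact ⟨p, p.isPath_of_length_le_dist_add_one (by omega), hp.trans hsum, hw⟩

end SimpleGraph

namespace ncontract

variable {V : Type} {G : SimpleGraph V} {x u v w : V}

def center (G : SimpleGraph V) (x : V) : {v : V // ¬ G.Adj x v} := ⟨x, G.irrefl⟩

open Classical in
noncomputable def proj (G : SimpleGraph V) (x : V) (v : V) : {v : V // ¬ G.Adj x v} :=
  if h : G.Adj x v then center G x else ⟨v, h⟩

theorem proj_of_adj (h : G.Adj x v) : proj G x v = center G x := by
  simp [proj, h]

theorem proj_of_not_adj (h : ¬ G.Adj x v) : proj G x v = ⟨v, h⟩ := by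
  simp [proj, h]

@[simp]
theorem proj_val (A : {v : V // ¬ G.Adj x v}) : proj G x A.1 = A :=
  proj_of_not_adj A.2

theorem ne_center_iff {A : {v : V // ¬ G.Adj x v}} : A ≠ center G x ↔ A.1 ≠ x :=
  not_congr Subtype.ext_iff

theorem center_eq_or_adj_proj (hu : G.Adj x u) (h : G.Adj u w) :
    center G x = proj G x w ∨ (ncontract G x).Adj (center G x) (proj G x w) := by
  by_cases hw : G.Adj x w
  · exact .inl (proj_of_adj hw).symm
  rw [proj_of_not_adj hw]
  by_cases hwx : w = x
  · subst hwx
    exact .inl rfl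
  · exact .inr (.inr (.inl ⟨rfl, hwx, u, hu, h⟩))

theorem proj_eq_or_adj_proj (h : G.Adj u w) :
    proj G x u = proj G x w ∨ (ncontract G x).Adj (proj G x u) (proj G x w) := by
  by_cases hu : G.Adj x u
  · rw [proj_of_adj hu]
    exact center_eq_or_adj_proj hu h
  by_cases hw : G.Adj x w
  · rw [proj_of_adj hw]
    exact (center_eq_or_adj_proj hw h.symm).imp Eq.symm SimpleGraph.Adj.symm
  · rw [proj_of_not_adj hu, proj_of_not_adj hw]
    exact .inr (.inl h)

theorem exists_walk_proj_length_le (p : G.Walk u v) :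
    ∃ q : (ncontract G x).Walk (proj G x u) (proj G x v), q.length ≤ p.length := by
  induction p with
  | nil => exact ⟨.nil, le_rfl⟩
  | cons h p ih =>
    obtain ⟨q, hq⟩ := ih
    rcases proj_eq_or_adj_proj (x := x) h with heq | hadj
    · exact ⟨q.copy heq.symm rfl, by simp only [Walk.length_copy, Walk.length_cons]; omega⟩
    · exact ⟨.cons hadj q, by simpa using hq⟩

theorem connected (hG : G.Connected) : (ncontract G x).Connected := by
  have : Nonempty {v : V // ¬ G.Adj x v} := ⟨center G x⟩
  refine ⟨fun A B => ?_⟩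
  obtain ⟨q, -⟩ := exists_walk_proj_length_le (x := x) (hG A.1 B.1).some
  rw [proj_val, proj_val] at q
  exact q.reachable

theorem dist_proj_le (h : G.Reachable u v) :
    (ncontract G x).dist (proj G x u) (proj G x v) ≤ G.dist u v := by
  obtain ⟨p, hp⟩ := h.exists_walk_length_eq_dist
  obtain ⟨q, hq⟩ := exists_walk_proj_length_le (x := x) p
  exact (dist_le q).trans (hp ▸ hq)

theorem dist_center_proj_add_one_le (h : G.Reachable x v) (hv : v ≠ x) :
    (ncontract G x).dist (center G x) (proj G x v) + 1 ≤ G.dist x v := by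
  obtain ⟨p, hp⟩ := h.exists_walk_length_eq_dist
  cases p with
  | nil => exact absurd rfl hv
  | cons hxw p =>
    obtain ⟨q, hq⟩ := exists_walk_proj_length_le (x := x) p
    have := dist_le (q.copy (proj_of_adj hxw) rfl)
    simp only [Walk.length_copy, Walk.length_cons] at hp this
    omega

theorem adj_of_ncontract_adj {A B : {v : V // ¬ G.Adj x v}} (h : (ncontract G x).Adj A B)
    (hA : A.1 ≠ x) (hB : B.1 ≠ x) : G.Adj A.1 B.1 := by
  rcases h with h | ⟨h, -⟩ | ⟨h, -⟩
  exacts [h, absurd h hA, absurd h hB]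

theorem exists_adj_adj_of_center_adj {B : {v : V // ¬ G.Adj x v}}
    (h : (ncontract G x).Adj (center G x) B) : ∃ y, G.Adj x y ∧ G.Adj y B.1 := by
  rcases h with h | ⟨-, -, hy⟩ | ⟨-, hxx, -⟩
  exacts [absurd h B.2, hy, absurd rfl hxx]

theorem exists_walk_length_eq_of_center_not_mem_support {A B : {v : V // ¬ G.Adj x v}}
    (q : (ncontract G x).Walk A B) (hq : center G x ∉ q.support) :
    ∃ p : G.Walk A.1 B.1, p.length = q.length := by
  induction q with
  | nil => exact ⟨.nil, rfl⟩
  | cons hadj q ih =>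
    rw [Walk.support_cons, List.mem_cons, not_or] at hq
    obtain ⟨p, hp⟩ := ih hq.2
    have hne := ne_center_iff.mp (Ne.symm hq.1)
    have hne' := ne_center_iff.mp (ne_of_mem_of_not_mem q.start_mem_support hq.2)
    exact ⟨.cons (adj_of_ncontract_adj hadj hne hne') p, by simp [hp]⟩

theorem dist_le_dist_center_add_one (hG : G.Connected) {A : {v : V // ¬ G.Adj x v}}
    (hA : A ≠ center G x) : G.dist x A.1 ≤ (ncontract G x).dist (center G x) A + 1 := by
  obtain ⟨r, hr, hrd⟩ := (connected hG).exists_path_of_dist (center G x) A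
  cases r with
  | nil => exact absurd rfl hA
  | cons hadj r =>
    obtain ⟨y, hxy, hyw⟩ := exists_adj_adj_of_center_adj hadj
    obtain ⟨p, hp⟩ := exists_walk_length_eq_of_center_not_mem_support r
      ((Walk.cons_isPath_iff hadj r).mp hr).2
    have := dist_le (Walk.cons hxy (Walk.cons hyw p))
    simp only [Walk.length_cons] at hrd this
    omega

theorem dist_center_add_one (hG : G.Connected) {A : {v : V // ¬ G.Adj x v}}
    (hA : A ≠ center G x) : (ncontract G x).dist (center G x) A + 1 = G.dist x A.1 := by
  refine le_antisymm ?_ (dist_le_dist_center_add_one hG hA)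
  simpa using dist_center_proj_add_one_le (hG x A.1) (ne_center_iff.mp hA)

theorem dist_add_two_eq_min (hG : G.Connected) {A B : {v : V // ¬ G.Adj x v}}
    (hA : A ≠ center G x) (hB : B ≠ center G x) :
    (ncontract G x).dist A B + 2 = min (G.dist A.1 B.1 + 2) (G.dist A.1 x + G.dist x B.1) := by
  have hAx := dist_center_add_one hG hA
  have hxB := dist_center_add_one hG hB
  rw [SimpleGraph.dist_comm, G.dist_comm] at hAx
  have hproj : (ncontract G x).dist A B ≤ G.dist A.1 B.1 := by
    simpa using dist_proj_le (x := x) (hG A.1 B.1)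
  have htri := (connected hG).dist_triangle (u := A) (v := center G x) (w := B)
  obtain ⟨q, hq⟩ := (connected hG).exists_walk_length_eq_dist A B
  by_cases hc : center G x ∈ q.support
  · have := q.dist_add_dist_le_length hc
    omega
  · obtain ⟨p, hp⟩ := exists_walk_length_eq_of_center_not_mem_support q hc
    have := dist_le p
    omega

end ncontract

theorem stmt_4_general {V : Type} (G : SimpleGraph V) (hconn : G.Connected)
    (x a b : V) (ha : ¬ G.Adj x a) (hb : ¬ G.Adj x b)
    (hno : ∀ p : G.Walk a b, p.IsPath → p.length = G.dist a b → x ∉ p.support) :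
    (ncontract G x).dist ⟨a, ha⟩ ⟨b, hb⟩ + 1 = G.dist a b ↔
      ∃ p : G.Walk a b, p.IsPath ∧ p.length = G.dist a b + 1 ∧ x ∈ p.support := by
  have hs := dist_add_one_le_dist_add_dist hconn hno
  have hax : a ≠ x := by rintro rfl; simp at hs
  have hbx : b ≠ x := by rintro rfl; simp at hs
  have hd := ncontract.dist_add_two_eq_min hconn (A := ⟨a, ha⟩) (B := ⟨b, hb⟩)
    (ncontract.ne_center_iff.mpr hax) (ncontract.ne_center_iff.mpr hbx)
  dsimp only at hd
  rw [exists_path_length_eq_dist_add_one_iff hconn hs]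
  omega

theorem stmt_4 {V : Type} [Fintype V] (G : SimpleGraph V) (hconn : G.Connected)
    (x a b : V) (ha : ¬ G.Adj x a) (hb : ¬ G.Adj x b)
    (hno : ∀ p : G.Walk a b, p.IsPath → p.length = G.dist a b → x ∉ p.support) :
    (ncontract G x).dist ⟨a, ha⟩ ⟨b, hb⟩ + 1 = G.dist a b ↔
      ∃ p : G.Walk a b, p.IsPath ∧ p.length = G.dist a b + 1 ∧ x ∈ p.support :=
  stmt_4_general G hconn x a b ha hb hno
end

section
/- Let G=(V,E) be a finite connected simple graph and let c ∈ C(G) be a center vertex with R(G) ≥ 1. Then c is a center vertex of G/c, i.e., the eccentricity of c in G/c equals R(G/c) = R(G) − 1. -/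
open SimpleGraph

/-!
Write `H = G/c` and `ĉ` for `c` viewed as a vertex of `H`. Collapsing `N(c)` onto `ĉ` turns walks
of `G` into walks of `H` that are no longer, while a geodesic of `H` either is a walk of `G` or
passes through `ĉ`; together these give `d_H(ĉ, v) = d_G(c, v) - 1`, so `r_H(ĉ) = R(G) - 1`.
Conversely, for `u` in `H` let `m` be `u` or its neighbour on a geodesic from `u` to `c`, and `y`
a vertex with `d_G(m, y) ≥ R(G)`. Whichever kind the `H`-geodesic from `u` to `y` (or to `ĉ` if
`y ∈ N(c)`) is, its length is at least `R(G) - 1`, so `r_H(u) ≥ R(G) - 1`.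
-/

section Eccentricity

variable {V : Type} (G : SimpleGraph V)

lemma dist_le_eccentr [Finite V] (x y : V) : G.dist x y ≤ eccentr G x :=
  le_csSup (Set.finite_range _).bddAbove ⟨y, rfl⟩

lemma exists_dist_eq_eccentr [Finite V] (x : V) : ∃ y, G.dist x y = eccentr G x :=
  have : Nonempty V := ⟨x⟩
  exists_eq_ciSup_of_finite

lemma eccentr_le_iff [Finite V] {x : V} {n : ℕ} : eccentr G x ≤ n ↔ ∀ y, G.dist x y ≤ n :=
  (csSup_le_iff (Set.finite_range _).bddAbove ⟨_, x, rfl⟩).trans Set.forall_mem_range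

lemma grRadius_le_eccentr (x : V) : grRadius G ≤ eccentr G x :=
  Nat.sInf_le ⟨x, rfl⟩

lemma exists_eccentr_eq_grRadius [Nonempty V] : ∃ x, eccentr G x = grRadius G :=
  Nat.sInf_mem (Set.range_nonempty _)

end Eccentricity

lemma SimpleGraph.Reachable.exists_adj_dist_add_one_eq {V : Type} {G : SimpleGraph V} {u w : V}
    (h : G.Reachable u w) (hne : u ≠ w) : ∃ m, G.Adj u m ∧ G.dist m w + 1 = G.dist u w := by
  obtain ⟨p, hp⟩ := h.exists_walk_length_eq_dist
  cases p with
  | nil => exact absurd rfl hne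
  | @cons _ m _ hadj p =>
    have hle : G.dist u w ≤ G.dist u m + G.dist m w := p.reachable.dist_triangle_right u
    have hum : G.dist u m = 1 := dist_eq_one_iff_adj.2 hadj
    have hmw : G.dist m w ≤ p.length := dist_le p
    rw [Walk.length_cons] at hp
    exact ⟨m, hadj, by omega⟩

section Contraction

variable {V : Type} {G : SimpleGraph V} {c : V}

variable (G c) in
def ncontractVertex : {v : V // ¬ G.Adj c v} := ⟨c, G.loopless.irrefl c⟩

@[simp]
lemma ncontractVertex_val : (ncontractVertex G c).1 = c := rfl

variable (G c) in
open Classical in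
noncomputable def ncontractProj (z : V) : {v : V // ¬ G.Adj c v} :=
  if h : G.Adj c z then ncontractVertex G c else ⟨z, h⟩

lemma ncontractProj_val (u : {v : V // ¬ G.Adj c v}) : ncontractProj G c u.1 = u :=
  dif_neg u.2

lemma ncontractProj_of_adj {z : V} (h : G.Adj c z) : ncontractProj G c z = ncontractVertex G c :=
  dif_pos h

lemma ncontractProj_eq_or_adj {z w : V} (h : G.Adj z w) :
    ncontractProj G c z = ncontractProj G c w ∨
      (ncontract G c).Adj (ncontractProj G c z) (ncontractProj G c w) := by
  by_cases hz : G.Adj c z <;> by_cases hw : G.Adj c w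
  · simp [ncontractProj_of_adj hz, ncontractProj_of_adj hw]
  · rw [ncontractProj_of_adj hz, ncontractProj_val (u := ⟨w, hw⟩)]
    by_cases hwc : w = c
    · exact Or.inl (Subtype.ext hwc.symm)
    · exact Or.inr (Or.inr (Or.inl ⟨rfl, hwc, z, hz, h⟩))
  · rw [ncontractProj_of_adj hw, ncontractProj_val (u := ⟨z, hz⟩)]
    by_cases hzc : z = c
    · exact Or.inl (Subtype.ext hzc)
    · exact Or.inr (Or.inr (Or.inr ⟨rfl, hzc, w, hw, h.symm⟩))
  · rw [ncontractProj_val (u := ⟨z, hz⟩), ncontractProj_val (u := ⟨w, hw⟩)]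
    exact Or.inr (Or.inl h)

lemma exists_ncontract_walk_length_le {z w : V} (p : G.Walk z w) :
    ∃ q : (ncontract G c).Walk (ncontractProj G c z) (ncontractProj G c w),
      q.length ≤ p.length := by
  induction p with
  | nil => exact ⟨.nil, le_rfl⟩
  | cons h p ih =>
    obtain ⟨q, hq⟩ := ih
    rcases ncontractProj_eq_or_adj (c := c) h with heq | hadj
    · exact ⟨q.copy heq.symm rfl, by simp; omega⟩
    · exact ⟨q.cons hadj, by simpa using hq⟩

lemma dist_ncontractProj_le {z w : V} (h : G.Reachable z w) :
    (ncontract G c).dist (ncontractProj G c z) (ncontractProj G c w) ≤ G.dist z w := by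
  obtain ⟨p, hp⟩ := h.exists_walk_length_eq_dist
  obtain ⟨q, hq⟩ := exists_ncontract_walk_length_le (c := c) p
  exact (dist_le q).trans (hp ▸ hq)

lemma ncontract_connected (hconn : G.Connected) : (ncontract G c).Connected := by
  refine (connected_iff _).2 ⟨fun u v => ?_, ⟨ncontractVertex G c⟩⟩
  obtain ⟨p⟩ := hconn u.1 v.1
  obtain ⟨q, -⟩ := exists_ncontract_walk_length_le (c := c) p
  exact ⟨q.copy (ncontractProj_val u) (ncontractProj_val v)⟩

/-- The two terms of the minimum account for walks avoiding and passing through `ĉ`; the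
induction goes through because `x ↦ d_G(c, x) - 1` changes by at most one along each edge of `H`. -/
lemma min_dist_le_length_of_ncontract_walk (hconn : G.Connected) {u v : {v : V // ¬ G.Adj c v}}
    (q : (ncontract G c).Walk u v) :
    min (G.dist u.1 v.1) (G.dist c u.1 - 1 + (G.dist c v.1 - 1)) ≤ q.length := by
  induction q with
  | nil => simp
  | @cons a b w h q ih =>
    rw [Walk.length_cons]
    have hbw : G.dist a.1 w.1 ≤ G.dist a.1 b.1 + G.dist b.1 w.1 := hconn.dist_triangle
    have hcw : G.dist c w.1 ≤ G.dist c b.1 + G.dist b.1 w.1 := hconn.dist_triangle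
    rcases h with hab | ⟨ha, -, y, hcy, hyb⟩ | ⟨hb, -, y, hcy, hya⟩
    · have hab' : G.dist a.1 b.1 = 1 := dist_eq_one_iff_adj.2 hab
      have hca : G.dist c a.1 ≤ G.dist c b.1 + G.dist b.1 a.1 := hconn.dist_triangle
      have hba : G.dist b.1 a.1 = 1 := dist_eq_one_iff_adj.2 hab.symm
      omega
    · have hcb : G.dist c b.1 ≤ 2 := dist_le (Walk.cons hcy (Walk.cons hyb Walk.nil))
      have hca : G.dist c a.1 = 0 := by rw [ha, dist_self]
      have haw : G.dist a.1 w.1 = G.dist c w.1 := by rw [ha]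
      omega
    · have hca : G.dist c a.1 ≤ 2 := dist_le (Walk.cons hcy (Walk.cons hya Walk.nil))
      have hcb : G.dist c b.1 = 0 := by rw [hb, dist_self]
      have hbw' : G.dist b.1 w.1 = G.dist c w.1 := by rw [hb]
      omega

lemma min_dist_le_dist_ncontract (hconn : G.Connected) (u v : {v : V // ¬ G.Adj c v}) :
    min (G.dist u.1 v.1) (G.dist c u.1 - 1 + (G.dist c v.1 - 1)) ≤ (ncontract G c).dist u v := by
  obtain ⟨q, hq⟩ := (ncontract_connected hconn).exists_walk_length_eq_dist u v
  exact hq ▸ min_dist_le_length_of_ncontract_walk hconn q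

lemma dist_ncontractVertex (hconn : G.Connected) (v : {v : V // ¬ G.Adj c v}) :
    (ncontract G c).dist (ncontractVertex G c) v = G.dist c v.1 - 1 := by
  refine le_antisymm ?_ (by simpa using min_dist_le_dist_ncontract hconn (ncontractVertex G c) v)
  by_cases hv : c = v.1
  · obtain rfl : ncontractVertex G c = v := Subtype.ext hv
    simp
  obtain ⟨m, hcm, hm⟩ := (hconn c v.1).exists_adj_dist_add_one_eq hv
  have := dist_ncontractProj_le (c := c) (hconn m v.1)
  rw [ncontractProj_of_adj hcm, ncontractProj_val] at this
  omega

lemma grRadius_sub_one_le_eccentr_ncontract [Finite V] (hconn : G.Connected)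
    (u : {v : V // ¬ G.Adj c v}) : grRadius G - 1 ≤ eccentr (ncontract G c) u := by
  obtain ⟨m, hum, hmc⟩ : ∃ m, G.dist u.1 m ≤ 1 ∧ G.dist m c ≤ G.dist u.1 c - 1 := by
    by_cases hu : u.1 = c
    · exact ⟨c, by simp [hu], by simp⟩
    · obtain ⟨m, hadj, hm⟩ := (hconn u.1 c).exists_adj_dist_add_one_eq hu
      exact ⟨m, (dist_eq_one_iff_adj.2 hadj).le, by omega⟩
  obtain ⟨y, hy⟩ := exists_dist_eq_eccentr G m
  have hR : grRadius G ≤ G.dist m y := hy ▸ grRadius_le_eccentr G m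
  have hmy : G.dist m y ≤ G.dist m c + G.dist c y := hconn.dist_triangle
  have huc : G.dist u.1 c = G.dist c u.1 := dist_comm
  by_cases hcy : G.Adj c y
  · have hecc := dist_le_eccentr (ncontract G c) u (ncontractVertex G c)
    have hcu := dist_ncontractVertex hconn u
    rw [dist_comm] at hcu
    have : G.dist c y = 1 := dist_eq_one_iff_adj.2 hcy
    omega
  · have hecc := dist_le_eccentr (ncontract G c) u ⟨y, hcy⟩
    have hmin := min_dist_le_dist_ncontract hconn u ⟨y, hcy⟩
    have hmy' : G.dist m y ≤ G.dist m u.1 + G.dist u.1 y := hconn.dist_triangle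
    have hmu : G.dist m u.1 = G.dist u.1 m := dist_comm
    dsimp only at hmin
    omega

end Contraction

theorem stmt_10_general {V : Type} [Fintype V] (G : SimpleGraph V) (hconn : G.Connected)
    (c : V) (hc : eccentr G c = grRadius G) :
    eccentr (ncontract G c) ⟨c, G.loopless.irrefl c⟩ = grRadius (ncontract G c) ∧
      grRadius (ncontract G c) = grRadius G - 1 := by
  have hecc : eccentr (ncontract G c) (ncontractVertex G c) ≤ grRadius G - 1 := by
    refine (eccentr_le_iff _).2 fun v => ?_
    rw [dist_ncontractVertex hconn, ← hc]
    exact Nat.sub_le_sub_right (dist_le_eccentr G c v.1) 1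
  have : Nonempty {v : V // ¬ G.Adj c v} := ⟨ncontractVertex G c⟩
  obtain ⟨u, hu⟩ := exists_eccentr_eq_grRadius (ncontract G c)
  have hrad : grRadius (ncontract G c) = grRadius G - 1 :=
    le_antisymm ((grRadius_le_eccentr _ _).trans hecc)
      (hu ▸ grRadius_sub_one_le_eccentr_ncontract hconn u)
  exact ⟨le_antisymm (hrad ▸ hecc) (grRadius_le_eccentr _ _), hrad⟩

theorem stmt_10 {V : Type} [Fintype V] (G : SimpleGraph V) (hconn : G.Connected)
    (c : V) (hc : eccentr G c = grRadius G) (hR : 1 ≤ grRadius G) :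
    eccentr (ncontract G c) ⟨c, G.loopless.irrefl c⟩ = grRadius (ncontract G c) ∧
      grRadius (ncontract G c) = grRadius G - 1 :=
  stmt_10_general G hconn c hc
end
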